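/- arXiv:1601.05510 — 8 statements merged into one kernel-verified Lean document; each statement's English description precedes it below -/
import Mathlib

section
/- Let 1 < ν < 2 and f : ℕ_a → ℝ. If the delta Riemann–Liouville fractional difference Δ_a^ν f(t) ≥ 0 for all t ∈ ℕ_{a+2−ν}, and f(a+1) ≥ f(a) ≥ 0, then Δf(t) ≥ 0 for all t ∈ ℕ_a; that is, f is nondecreasing on ℕ_a. -/
/-- Falling factorial `t^(α) = Γ(t+1)/Γ(t+1-α)`. -/
noncomputable def fallingFactorial (t α : ℝ) : ℝ := Real.Gamma (t + 1) / Real.Gamma (t + 1 - α)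

/-- The delta left fractional sum `Δ_a^{-β} f` evaluated at the grid point `t = a + β + k`:
`Δ_a^{-β} f(a+β+k) = (1/Γ(β)) Σ_{s=a}^{a+k} (t-s-1)^{(β-1)} f(s)`. -/
noncomputable def deltaSum (a : ℤ) (β : ℝ) (f : ℤ → ℝ) (k : ℕ) : ℝ :=
  (1 / Real.Gamma β) *
    ∑ j ∈ Finset.range (k + 1), fallingFactorial (β + (k : ℝ) - (j : ℝ) - 1) (β - 1) * f (a + j)

noncomputable def bb (β : ℝ) (m : ℕ) : ℝ := Real.Gamma (β + m) / Real.Gamma ((m : ℝ) + 1)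

lemma bb_pos {β : ℝ} (hβ : 0 < β) (m : ℕ) : 0 < bb β m := by
  unfold bb
  have h1 : (0:ℝ) < β + m := by positivity
  have h2 : (0:ℝ) < (m:ℝ) + 1 := by positivity
  exact div_pos (Real.Gamma_pos_of_pos h1) (Real.Gamma_pos_of_pos h2)

lemma bb_rec {β : ℝ} (hβ : 0 < β) (m : ℕ) :
    bb β (m + 1) = (β + m) / (m + 1) * bb β m := by
  unfold bb
  have h1 : (β + (m:ℝ)) ≠ 0 := by positivity
  have h2 : ((m:ℝ) + 1) ≠ 0 := by positivity
  have e1 : β + ((m:ℕ)+1 : ℕ) = (β + m) + 1 := by push_cast; ring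
  have e2 : (((m:ℕ)+1 : ℕ) : ℝ) + 1 = ((m:ℝ) + 1) + 1 := by push_cast; ring
  rw [e1, e2, Real.Gamma_add_one h1, Real.Gamma_add_one h2]
  have hΓ2 : Real.Gamma ((m:ℝ)+1) ≠ 0 := (Real.Gamma_pos_of_pos (by positivity)).ne'
  field_simp

lemma bb_diff {β : ℝ} (hβ : 0 < β) (m : ℕ) :
    bb β (m + 1) - bb β m = (β - 1) / (m + 1) * bb β m := by
  rw [bb_rec hβ m]
  have h2 : ((m:ℝ) + 1) ≠ 0 := by positivity
  field_simp
  ring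

lemma bb_anti {β : ℝ} (hβ : 0 < β) (hβ1 : β < 1) (m : ℕ) :
    bb β (m + 1) ≤ bb β m := by
  have := bb_diff hβ m
  have hb := bb_pos hβ m
  have : bb β (m + 1) - bb β m ≤ 0 := by
    rw [this]
    apply mul_nonpos_of_nonpos_of_nonneg
    · apply div_nonpos_of_nonpos_of_nonneg <;> [linarith; positivity]
    · linarith
  linarith

lemma bb_conv {β : ℝ} (hβ : 0 < β) (hβ1 : β < 1) (m : ℕ) :
    0 ≤ bb β (m + 2) - 2 * bb β (m + 1) + bb β m := by
  have e1 := bb_diff hβ m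
  have e2 := bb_diff hβ (m + 1)
  have hb := bb_pos hβ m
  have hb1 := bb_pos hβ (m+1)
  have er : bb β (m + 1) = (β + m) / (m + 1) * bb β m := bb_rec hβ m
  have key : bb β (m + 2) - 2 * bb β (m + 1) + bb β m
      = (β - 1) * (β - 2) / (((m:ℝ) + 1) * ((m:ℝ) + 2)) * bb β m := by
    have h1 : ((m:ℝ) + 1) ≠ 0 := by positivity
    have h2 : ((m:ℝ) + 2) ≠ 0 := by positivity
    have e2' : bb β (m+2) - bb β (m+1) = (β - 1) / ((m:ℝ) + 2) * bb β (m+1) := by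
      have hd := bb_diff hβ (m+1)
      have hm : m + 1 + 1 = m + 2 := rfl
      rw [hm] at hd
      push_cast at hd
      have hc : ((m:ℝ) + 1 + 1) = (m:ℝ) + 2 := by ring
      rw [hc] at hd; linarith
    rw [er] at e2' ⊢
    field_simp at e2' ⊢
    linarith [e2']
  rw [key]
  have : 0 < (β - 1) * (β - 2) := mul_pos_of_neg_of_neg (by linarith) (by linarith)
  positivity

lemma bb_zero (β : ℝ) : bb β 0 = Real.Gamma β := by
  unfold bb; norm_num [Real.Gamma_one]

lemma fall_eq {β : ℝ} {k j : ℕ} (hj : j ≤ k) :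
    fallingFactorial (β + (k:ℝ) - (j:ℝ) - 1) (β - 1) = bb β (k - j) := by
  unfold fallingFactorial bb
  have e1 : β + (k:ℝ) - (j:ℝ) - 1 + 1 = β + ((k - j : ℕ) : ℝ) := by
    rw [Nat.cast_sub hj]; ring
  rw [e1, show β + ((k - j : ℕ) : ℝ) - (β - 1) = ((k - j : ℕ) : ℝ) + 1 from by ring]

noncomputable def gg (a : ℤ) (f : ℤ → ℝ) (m : ℕ) : ℝ := f (a + (m : ℤ))

noncomputable def SS (a : ℤ) (β : ℝ) (f : ℤ → ℝ) (n : ℕ) : ℝ :=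
  ∑ m ∈ Finset.range (n + 1), bb β m * gg a f (n - m)

lemma SS_eq (a : ℤ) {β : ℝ} (hβ : 0 < β) (f : ℤ → ℝ) (k : ℕ) :
    Real.Gamma β * deltaSum a β f k = SS a β f k := by
  have hΓ : Real.Gamma β ≠ 0 := (Real.Gamma_pos_of_pos hβ).ne'
  unfold deltaSum SS gg
  rw [← mul_assoc, mul_one_div, div_self hΓ, one_mul]
  rw [← Finset.sum_range_reflect (fun m => bb β m * f (a + ((k - m : ℕ) : ℤ))) (k+1)]
  apply Finset.sum_congr rfl
  intro j hj
  rw [Finset.mem_range] at hj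
  have hj' : j ≤ k := Nat.lt_succ_iff.mp hj
  rw [fall_eq hj']
  have e1 : k - (k + 1 - 1 - j) = j := by omega
  have e2 : k + 1 - 1 - j = k - j := by omega
  rw [e1, e2]

lemma SS_split (a : ℤ) (β : ℝ) (f : ℤ → ℝ) (n : ℕ) :
    SS a β f (n + 1)
      = (∑ m ∈ Finset.range (n + 1), bb β (m + 1) * gg a f (n - m))
        + bb β 0 * gg a f (n + 1) := by
  unfold SS
  rw [Finset.sum_range_succ']
  congr 1
  apply Finset.sum_congr rfl
  intro m _
  have e : n + 1 - (m + 1) = n - m := by omega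
  rw [e]

lemma chain {g : ℕ → ℝ} {n : ℕ} (h : ∀ m, m < n → g m ≤ g (m + 1)) :
    ∀ i j, i ≤ j → j ≤ n → g i ≤ g j := by
  intro i j hij
  induction hij with
  | refl => intro _; exact le_refl _
  | @step m hm ih =>
      intro hmn
      exact le_trans (ih (by omega)) (h m (by omega))

lemma tel_sum (β : ℝ) (n : ℕ) :
    ∑ m ∈ Finset.range n, (bb β (m+2) - 2*bb β (m+1) + bb β m)
      = (bb β (n+1) - bb β n) - (bb β 1 - bb β 0) := by
  induction n with
  | zero => simp
  | succ n ih =>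
      rw [Finset.sum_range_succ, ih, show n+1+1 = n+2 from rfl]
      ring

lemma key_step (a : ℤ) {β : ℝ} (hβ0 : 0 < β) (hβ1 : β < 1) (f : ℤ → ℝ) (k : ℕ)
    (hD : 0 ≤ SS a β f (k+2) - 2 * SS a β f (k+1) + SS a β f k)
    (mono : ∀ i j, i ≤ j → j ≤ k + 1 → gg a f i ≤ gg a f j)
    (hg0 : 0 ≤ gg a f 0) :
    gg a f (k+1) ≤ gg a f (k+2) := by
  have hgk1 : 0 ≤ gg a f (k+1) := le_trans hg0 (mono 0 (k+1) (Nat.zero_le _) le_rfl)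
  set A2 := ∑ m ∈ Finset.range (k+1), bb β (m+2) * gg a f (k-m) with hA2
  set A1 := ∑ m ∈ Finset.range (k+1), bb β (m+1) * gg a f (k-m) with hA1
  set A0 := ∑ m ∈ Finset.range (k+1), bb β m * gg a f (k-m) with hA0
  have eS0 : SS a β f k = A0 := rfl
  have eS1 : SS a β f (k+1) = A1 + bb β 0 * gg a f (k+1) := SS_split a β f k
  have inner : (∑ m ∈ Finset.range (k+2), bb β (m+1) * gg a f (k+1-m))
      = A2 + bb β 1 * gg a f (k+1) := by
    rw [Finset.sum_range_succ']
    congr 1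
    apply Finset.sum_congr rfl
    intro m _
    rw [show m+1+1 = m+2 from rfl, show k+1-(m+1) = k-m from by omega]
  have eS2 : SS a β f (k+2) = A2 + bb β 1 * gg a f (k+1) + bb β 0 * gg a f (k+2) := by
    rw [show k+2 = (k+1)+1 from rfl, SS_split a β f (k+1), inner]
  have hconv : A2 - 2*A1 + A0 ≤ (bb β 0 - bb β 1) * gg a f (k+1) := by
    have h2A1 : 2 * A1 = ∑ m ∈ Finset.range (k+1), 2 * (bb β (m+1) * gg a f (k-m)) := by
      rw [hA1, Finset.mul_sum]
    have hcomb : A2 - 2*A1 + A0 = ∑ m ∈ Finset.range (k+1),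
        ((bb β (m+2) - 2*bb β (m+1) + bb β m) * gg a f (k-m)) := by
      rw [h2A1, hA2, hA0, ← Finset.sum_sub_distrib, ← Finset.sum_add_distrib]
      apply Finset.sum_congr rfl
      intro m _
      ring
    rw [hcomb]
    have step2 : ∑ m ∈ Finset.range (k+1), (bb β (m+2) - 2*bb β (m+1) + bb β m) * gg a f (k-m)
        ≤ ∑ m ∈ Finset.range (k+1), (bb β (m+2) - 2*bb β (m+1) + bb β m) * gg a f (k+1) :=
      Finset.sum_le_sum (fun m _ =>
        mul_le_mul_of_nonneg_left (mono (k-m) (k+1) (by omega) le_rfl) (bb_conv hβ0 hβ1 m))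
    have step3 : (∑ m ∈ Finset.range (k+1), (bb β (m+2) - 2*bb β (m+1) + bb β m)) * gg a f (k+1)
        ≤ (bb β 0 - bb β 1) * gg a f (k+1) := by
      apply mul_le_mul_of_nonneg_right _ hgk1
      rw [tel_sum β (k+1)]
      have := bb_anti hβ0 hβ1 (k+1)
      linarith
    calc ∑ m ∈ Finset.range (k+1), (bb β (m+2) - 2*bb β (m+1) + bb β m) * gg a f (k-m)
        ≤ ∑ m ∈ Finset.range (k+1), (bb β (m+2) - 2*bb β (m+1) + bb β m) * gg a f (k+1) := step2
      _ = (∑ m ∈ Finset.range (k+1), (bb β (m+2) - 2*bb β (m+1) + bb β m)) * gg a f (k+1) :=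
          (Finset.sum_mul _ _ _).symm
      _ ≤ (bb β 0 - bb β 1) * gg a f (k+1) := step3
  have hb0 : 0 < bb β 0 := bb_pos hβ0 0
  have expand : (bb β 0 - bb β 1) * gg a f (k+1)
      = bb β 0 * gg a f (k+1) - bb β 1 * gg a f (k+1) := by ring
  rw [eS0, eS1, eS2] at hD
  have hfin : bb β 0 * gg a f (k+1) ≤ bb β 0 * gg a f (k+2) := by linarith [hconv, expand]
  exact le_of_mul_le_mul_left hfin hb0


/-- If `1 < ν < 2`, the delta Riemann fractional difference
`Δ_a^ν f(t) = Δ² (Δ_a^{-(2-ν)} f)(t) ≥ 0` for all `t ∈ ℕ_{a+2-ν}` (i.e. the grid points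
`t = a + (2-ν) + k`, `k ∈ ℕ`), and `f(a+1) ≥ f(a) ≥ 0`, then `Δ f(t) ≥ 0`
for all `t ∈ ℕ_a`; that is, `f` is nondecreasing on `ℕ_a`. -/
theorem delta_monotonicity (a : ℤ) (ν : ℝ) (hν1 : 1 < ν) (hν2 : ν < 2) (f : ℤ → ℝ)
    (h : ∀ k : ℕ, deltaSum a (2 - ν) f (k + 2) - 2 * deltaSum a (2 - ν) f (k + 1) +
      deltaSum a (2 - ν) f k ≥ 0)
    (h1 : f (a + 1) ≥ f a) (h0 : f a ≥ 0) :
    ∀ t : ℤ, a ≤ t → f (t + 1) - f t ≥ 0 := by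
  have hβ0 : 0 < 2 - ν := by linarith
  have hβ1 : 2 - ν < 1 := by linarith
  have hΓ : 0 < Real.Gamma (2 - ν) := Real.Gamma_pos_of_pos hβ0
  have hD : ∀ k : ℕ, 0 ≤ SS a (2-ν) f (k+2) - 2 * SS a (2-ν) f (k+1) + SS a (2-ν) f k := by
    intro k
    have hk := h k
    have h2 : 0 ≤ Real.Gamma (2-ν) * (deltaSum a (2-ν) f (k+2)
        - 2 * deltaSum a (2-ν) f (k+1) + deltaSum a (2-ν) f k) := mul_nonneg hΓ.le hk
    have expand : Real.Gamma (2-ν) * (deltaSum a (2-ν) f (k+2)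
          - 2 * deltaSum a (2-ν) f (k+1) + deltaSum a (2-ν) f k)
        = Real.Gamma (2-ν) * deltaSum a (2-ν) f (k+2)
          - 2 * (Real.Gamma (2-ν) * deltaSum a (2-ν) f (k+1))
          + Real.Gamma (2-ν) * deltaSum a (2-ν) f k := by ring
    rw [expand, SS_eq a hβ0 f (k+2), SS_eq a hβ0 f (k+1), SS_eq a hβ0 f k] at h2
    exact h2
  have hg10 : gg a f 0 ≤ gg a f 1 := by simpa [gg] using h1
  have hg00 : 0 ≤ gg a f 0 := by simpa [gg] using h0
  have main : ∀ k : ℕ, gg a f k ≤ gg a f (k+1) := by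
    intro k
    induction k using Nat.strong_induction_on with
    | _ k ih =>
      cases k with
      | zero => exact hg10
      | succ k =>
        have mono : ∀ i j, i ≤ j → j ≤ k + 1 → gg a f i ≤ gg a f j :=
          chain (fun m hm => ih m (by omega))
        exact key_step a hβ0 hβ1 f k (hD k) mono hg00
  intro t ht
  obtain ⟨n, rfl⟩ := Int.le.dest ht
  have h2 : f (a + (n:ℤ)) ≤ f (a + (n:ℤ) + 1) := by
    have hm := main n
    unfold gg at hm
    rwa [show ((n+1:ℕ):ℤ) = (n:ℤ)+1 from by push_cast; ring, ← add_assoc] at hm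
  linarith
end

section
/- Let 1 < ν < 2 and f : ℕ_{a−1} → ℝ. If the nabla Riemann–Liouville fractional difference ∇_{a−1}^ν f(t) ≥ 0 for each t ∈ ℕ_a, then ∇f(t) ≥ 0 for all t ∈ ℕ_{a+1}; that is, f is nondecreasing on ℕ_{a+1}. -/
/-- Rising factorial `t^{ᾱ} = Γ(t+α)/Γ(t)`. -/
noncomputable def risingFactorial (t α : ℝ) : ℝ := Real.Gamma (t + α) / Real.Gamma t

/-- The nabla (left Riemann) fractional difference with base point `a - 1`, in its
equivalent representation `∇_{a-1}^ν f(t) = (1/Γ(-ν)) Σ_{s=a}^{t} (t-s+1)^{\overline{-ν-1}} f(s)`. -/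
noncomputable def nablaRL (a : ℤ) (ν : ℝ) (f : ℤ → ℝ) (t : ℤ) : ℝ :=
  (1 / Real.Gamma (-ν)) *
    ∑ j ∈ Finset.range ((t - a).toNat + 1),
      risingFactorial ((t : ℝ) - (a : ℝ) - (j : ℝ) + 1) (-ν - 1) * f (a + j)

/-!
Writing `t = a + n`, the fractional difference is `∇^ν f(t) = ∑_{k ≤ n} w_k f(t - k)` with
`w_k = (-ν)^{\overline k} / k!`. For `1 < ν < 2` one has `w_0 = 1`, `w_1 = -ν`, `w_k ≥ 0` for `k ≥ 2`,
and the partial sums `∑_{k ≤ n} w_k = (1 - ν)^{\overline n} / n!` are `≤ 0` for `n ≥ 1`.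
By induction `0 ≤ f a ≤ ⋯ ≤ f (t - 1)`, so replacing every `f (t - k)`, `k ≥ 1`, by `f (t - 1)` can only
increase the sum, whence `0 ≤ ∇^ν f(t) ≤ f t + (∑_{k ≤ n} w_k - 1) f (t - 1) ≤ f t - f (t - 1)`.
-/

open Finset
open scoped Nat

theorem ascPochhammer_succ_eval_left {S : Type*} [CommSemiring S] (n : ℕ) (x : S) :
    (ascPochhammer S (n + 1)).eval x = x * (ascPochhammer S n).eval (x + 1) := by
  simp [ascPochhammer_succ_left, Polynomial.eval_comp]

theorem sum_range_ascPochhammer_eval_div_factorial {K : Type*} [Field K] [CharZero K]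
    (x : K) (n : ℕ) :
    ∑ k ∈ range (n + 1), (ascPochhammer K k).eval x / k ! =
      (ascPochhammer K n).eval (x + 1) / n ! := by
  induction n with
  | zero => simp
  | succ n ih =>
    rw [sum_range_succ, ih, ascPochhammer_succ_eval_left, ascPochhammer_succ_eval,
      Nat.factorial_succ]
    push_cast
    field_simp
    ring

theorem Real.Gamma_add_nat_eq_mul_ascPochhammer {x : ℝ} (hx : ∀ m : ℕ, x ≠ -m) (n : ℕ) :
    Real.Gamma (x + n) = Real.Gamma x * (ascPochhammer ℝ n).eval x := by
  induction n with
  | zero => simp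
  | succ n ih =>
    have hxn : x + n ≠ 0 := fun h => hx n (by linarith)
    rw [Nat.cast_succ, ← add_assoc, Real.Gamma_add_one hxn, ih, ascPochhammer_succ_eval]
    ring

noncomputable def nablaWeight (ν : ℝ) (k : ℕ) : ℝ := (ascPochhammer ℝ k).eval (-ν) / k !

section NablaWeight

variable {ν : ℝ}

theorem nablaWeight_zero (ν : ℝ) : nablaWeight ν 0 = 1 := by
  simp [nablaWeight]

theorem nablaWeight_nonneg (h1 : 1 ≤ ν) (h2 : ν < 2) {k : ℕ} (hk : 2 ≤ k) :
    0 ≤ nablaWeight ν k := by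
  obtain ⟨k, rfl⟩ := Nat.exists_eq_add_of_le' hk
  have hpos := ascPochhammer_pos k (-ν + 1 + 1) (by linarith)
  rw [nablaWeight, ascPochhammer_succ_eval_left, ascPochhammer_succ_eval_left]
  have hprod : 0 ≤ -ν * (-ν + 1) := by nlinarith
  rw [← mul_assoc]
  exact div_nonneg (mul_nonneg hprod hpos.le) (by positivity)

theorem sum_range_nablaWeight_nonpos (h1 : 1 ≤ ν) (h2 : ν < 2) {n : ℕ} (hn : 1 ≤ n) :
    ∑ k ∈ range (n + 1), nablaWeight ν k ≤ 0 := by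
  obtain ⟨n, rfl⟩ := Nat.exists_eq_add_of_le' hn
  simp only [nablaWeight]
  rw [sum_range_ascPochhammer_eval_div_factorial, ascPochhammer_succ_eval_left]
  have hpos := ascPochhammer_pos n (-ν + 1 + 1) (by linarith)
  have hneg : -ν + 1 ≤ 0 := by linarith
  exact div_nonpos_of_nonpos_of_nonneg (mul_nonpos_of_nonpos_of_nonneg hneg hpos.le)
    (by positivity)

theorem risingFactorial_eq_Gamma_mul_nablaWeight (hν : ∀ m : ℕ, ν ≠ m) (k : ℕ) :
    risingFactorial ((k : ℝ) + 1) (-ν - 1) = Real.Gamma (-ν) * nablaWeight ν k := by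
  have hx : ∀ m : ℕ, -ν ≠ -m := fun m h => hν m (neg_injective h)
  rw [risingFactorial, show (k : ℝ) + 1 + (-ν - 1) = -ν + k by ring,
    Real.Gamma_add_nat_eq_mul_ascPochhammer hx, Real.Gamma_nat_eq_factorial, nablaWeight]
  ring

theorem nablaRL_add_nat (hν : ∀ m : ℕ, ν ≠ m) (a : ℤ) (f : ℤ → ℝ) (n : ℕ) :
    nablaRL a ν f (a + n) =
      ∑ k ∈ range (n + 1), nablaWeight ν k * f (a + (n - k : ℕ)) := by
  have hΓ : Real.Gamma (-ν) ≠ 0 := Real.Gamma_ne_zero fun m h => hν m (neg_injective h)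
  rw [nablaRL, show (a + n - a).toNat = n by omega, mul_sum]
  conv_rhs => rw [← sum_range_reflect]
  refine sum_congr rfl fun j hj => ?_
  have hjn : j ≤ n := Nat.lt_succ_iff.mp (mem_range.mp hj)
  have harg : ((a + n : ℤ) : ℝ) - a - j + 1 = ((n - j : ℕ) : ℝ) + 1 := by
    push_cast [hjn]; ring
  rw [harg, risingFactorial_eq_Gamma_mul_nablaWeight hν, Nat.add_sub_cancel, Nat.sub_sub_self hjn,
    one_div, ← mul_assoc, inv_mul_cancel_left₀ hΓ]

end NablaWeight

section Convolution

variable {w u : ℕ → ℝ}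

theorem le_succ_of_convolution_nonneg (hw0 : w 0 = 1) (hw : ∀ k, 2 ≤ k → 0 ≤ w k) {n : ℕ}
    (hsum : ∑ k ∈ range (n + 2), w k ≤ 0) (hu0 : 0 ≤ u 0) (hmax : ∀ j ≤ n, u j ≤ u n)
    (hconv : 0 ≤ ∑ k ∈ range (n + 2), w k * u (n + 1 - k)) : u n ≤ u (n + 1) := by
  have hun : 0 ≤ u n := hu0.trans (hmax 0 n.zero_le)
  have hterm : ∀ k ∈ range (n + 1), w (k + 1) * u (n + 1 - (k + 1)) ≤ w (k + 1) * u n := by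
    rintro (_ | k) hk
    · simp
    · exact mul_le_mul_of_nonneg_left (hmax _ (by omega)) (hw _ (by omega))
  rw [sum_range_succ'] at hsum hconv
  simp only [hw0, one_mul, Nat.sub_zero] at hsum hconv
  have hbound := sum_le_sum hterm
  rw [← sum_mul] at hbound
  nlinarith [mul_nonneg (by linarith : 0 ≤ -1 - ∑ k ∈ range (n + 1), w (k + 1)) hun]

theorem monotone_of_forall_convolution_nonneg (hw0 : w 0 = 1) (hw : ∀ k, 2 ≤ k → 0 ≤ w k)
    (hsum : ∀ n, 1 ≤ n → ∑ k ∈ range (n + 1), w k ≤ 0)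
    (hconv : ∀ n, 0 ≤ ∑ k ∈ range (n + 1), w k * u (n - k)) : Monotone u := by
  have hu0 : 0 ≤ u 0 := by simpa [hw0] using hconv 0
  have hmax : ∀ n, ∀ j ≤ n, u j ≤ u n := by
    intro n
    induction n with
    | zero => intro j hj; rw [Nat.le_zero.mp hj]
    | succ n ih =>
      have hstep := le_succ_of_convolution_nonneg hw0 hw (hsum (n + 1) (Nat.le_add_left 1 n)) hu0 ih
        (hconv (n + 1))
      intro j hj
      rcases hj.eq_or_lt with rfl | hj
      · rfl
      · exact (ih j (Nat.lt_succ_iff.mp hj)).trans hstep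
  exact monotone_nat_of_le_succ fun n => hmax (n + 1) n n.le_succ

end Convolution

/-- If `1 < ν < 2` and `∇_{a-1}^ν f(t) ≥ 0` for each `t ∈ ℕ_a`, then `∇ f(t) ≥ 0`
for all `t ∈ ℕ_{a+1}`; that is, `f` is nondecreasing on `ℕ_{a+1}`. -/
theorem nabla_monotonicity (a : ℤ) (ν : ℝ) (hν1 : 1 < ν) (hν2 : ν < 2) (f : ℤ → ℝ)
    (h : ∀ t : ℤ, a ≤ t → nablaRL a ν f t ≥ 0) :
    ∀ t : ℤ, a + 1 ≤ t → f t - f (t - 1) ≥ 0 := by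
  have hν : ∀ m : ℕ, ν ≠ m := by
    rintro m rfl
    norm_cast at hν1 hν2
    omega
  have hmono : Monotone fun j : ℕ => f (a + j) :=
    monotone_of_forall_convolution_nonneg (nablaWeight_zero ν)
      (fun _ => nablaWeight_nonneg hν1.le hν2) (fun _ => sum_range_nablaWeight_nonpos hν1.le hν2)
      fun n => nablaRL_add_nat hν a f n ▸ h _ (by omega)
  intro t ht
  obtain ⟨m, rfl⟩ : ∃ m : ℕ, t = a + (m + 1 : ℕ) := ⟨(t - a - 1).toNat, by omega⟩
  have hle := hmono m.le_succ
  simp only [Nat.cast_succ, ← add_assoc] at hle ⊢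
  rw [add_sub_cancel_right]
  linarith
end

section
/- (Dual identity for left fractional differences.) Let 0 ≤ n−1 < α ≤ n and y : ℕ_a → ℝ. Then (Δ_a^α y)(t−α) = (∇_{a−1}^α y)(t) for all t ∈ ℕ_{n+a}. -/
/-- The nabla left fractional sum with base point `a - 1`:
`∇_{a-1}^{-β} y(t) = (1/Γ(β)) Σ_{s=a}^{t} (t-s+1)^{\overline{β-1}} y(s)`. -/
noncomputable def nablaSum (a : ℤ) (β : ℝ) (f : ℤ → ℝ) (t : ℤ) : ℝ :=
  (1 / Real.Gamma β) *
    ∑ j ∈ Finset.range ((t - a).toNat + 1),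
      risingFactorial ((t : ℝ) - (a : ℝ) - (j : ℝ) + 1) (β - 1) * f (a + j)

/-- Forward difference on sequences indexed by the grid `a + β + k`. -/
def fdiffN (g : ℕ → ℝ) : ℕ → ℝ := fun k => g (k + 1) - g k

/-- Backward difference `∇ g(t) = g(t) - g(t-1)`. -/
def bdiff (g : ℤ → ℝ) : ℤ → ℝ := fun t => g t - g (t - 1)

lemma shift_lemma : ∀ (m : ℕ) (a : ℤ) (g : ℕ → ℝ) (N : ℤ → ℝ)
    (h : ∀ k : ℕ, g k = N (a + k)) (k : ℕ),
    (fdiffN^[m] g) k = (bdiff^[m] N) (a + m + k) := by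
  intro m
  induction m with
  | zero => intro a g N h k; simpa using h k
  | succ m ih =>
    intro a g N h k
    rw [Function.iterate_succ_apply, Function.iterate_succ_apply]
    have := ih (a + 1) (fdiffN g) (bdiff N) (fun k => by
      simp only [fdiffN, bdiff, h]
      congr 1 <;> push_cast <;> ring_nf) k
    rw [this]; congr 1; push_cast; ring

lemma base_eq (a : ℤ) (β : ℝ) (y : ℤ → ℝ) (k : ℕ) :
    deltaSum a β y k = nablaSum a β y (a + k) := by
  unfold deltaSum nablaSum
  have h1 : ((a + (k : ℤ)) - a).toNat = k := by omega
  rw [h1]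
  congr 1
  apply Finset.sum_congr rfl
  intro j hj
  congr 1
  unfold fallingFactorial risingFactorial
  push_cast
  congr 1 <;> ring_nf

/-- Dual identity for left fractional differences: for `0 ≤ n-1 < α ≤ n`,
`(Δ_a^α y)(t-α) = (∇_{a-1}^α y)(t)` for all `t ∈ ℕ_{n+a}`. Here `t = a + n + k`, so
the left side `Δ^n (Δ_a^{-(n-α)} y)` is evaluated at the grid point `a + (n-α) + k`,
and the right side is `∇^n (∇_{a-1}^{-(n-α)} y)(t)`. -/
theorem dual_identity_left_differences (a : ℤ) (n : ℕ) (hn : 1 ≤ n) (α : ℝ)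
    (h1 : (n : ℝ) - 1 < α) (h2 : α ≤ n) (y : ℤ → ℝ) :
    ∀ k : ℕ, (fdiffN^[n] (deltaSum a ((n : ℝ) - α) y)) k =
      (bdiff^[n] (nablaSum a ((n : ℝ) - α) y)) (a + n + k) := by
  intro k
  exact shift_lemma n a _ _ (base_eq a _ y) k
end

section
/- (Dual identity for left fractional sums.) Let α > 0 and y : ℕ_a → ℝ. Then (Δ_a^{−α} y)(t+α) = (∇_{a−1}^{−α} y)(t) for all t ∈ ℕ_a. -/
/-- Dual identity for left fractional sums: for `α > 0`,
`(Δ_a^{-α} y)(t+α) = (∇_{a-1}^{-α} y)(t)` for all `t ∈ ℕ_a` (write `t = a + k`). -/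
theorem dual_identity_left_sums (a : ℤ) (α : ℝ) (hα : 0 < α) (y : ℤ → ℝ) :
    ∀ k : ℕ, deltaSum a α y k = nablaSum a α y (a + k) := by
  intro k
  unfold deltaSum nablaSum
  have hk : (a + (k:ℤ) - a).toNat = k := by simp
  rw [hk]
  congr 1
  apply Finset.sum_congr rfl
  intro j _
  unfold fallingFactorial risingFactorial
  push_cast
  congr 2 <;> ring
end

section
/- Let y : ℕ_0 → ℝ with y(0) ≥ 0, fix ν ∈ (0,1), and suppose Δ_0^ν y(t) ≥ 0 for each t ∈ ℕ_{1−ν}. Then y is ν-increasing on ℕ_0, i.e., y(a+1) ≥ ν y(a) for all a ∈ ℕ_0. -/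
/-!
With `β = 1 - ν` and the kernel `K n = Γ(β + n) / Γ(n + 1)`, one has
`Γ(β) Δ_0^{-β} y(β + k) = ∑_{j ≤ k} K (k - j) y j`, `K 0 = Γ(β)` and
`K n - K (n + 1) = ν K n / (n + 1)`. Hence the increment of the fractional sum is
`y (k + 1) - (ν / Γ(β)) ∑_{j ≤ k} K (k - j) y j / (k - j + 1)`, whose nonnegativity gives
`y (k + 1) ≥ ν y k` as soon as `y 0, …, y (k - 1) ≥ 0`. Since `ν > 0`, this in turn propagates
nonnegativity from `y 0` to every `y k`, so the inequality holds for all `k`.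
-/

open Finset

/-- The kernel `(n + β - 1)^(β - 1)` of the fractional sum of order `β`. -/
noncomputable def sumKernel (β : ℝ) (n : ℕ) : ℝ :=
  Real.Gamma (β + n) / Real.Gamma (n + 1)

section SumKernel

variable {β : ℝ}

lemma fallingFactorial_eq_sumKernel (β : ℝ) {k j : ℕ} (hj : j ≤ k) :
    fallingFactorial (β + k - j - 1) (β - 1) = sumKernel β (k - j) := by
  unfold fallingFactorial sumKernel
  push_cast [Nat.cast_sub hj]
  congr 1 <;> ring_nf

lemma sumKernel_zero (β : ℝ) : sumKernel β 0 = Real.Gamma β := by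
  simp [sumKernel]

lemma sumKernel_pos (hβ : 0 < β) (n : ℕ) : 0 < sumKernel β n := by
  unfold sumKernel
  apply div_pos <;> apply Real.Gamma_pos_of_pos <;> positivity

lemma sumKernel_succ {n : ℕ} (hβn : β + n ≠ 0) :
    sumKernel β (n + 1) = (β + n) / (n + 1) * sumKernel β n := by
  unfold sumKernel
  push_cast
  rw [← add_assoc, Real.Gamma_add_one hβn, Real.Gamma_add_one (by positivity)]
  have : Real.Gamma ((n : ℝ) + 1) ≠ 0 := (Real.Gamma_pos_of_pos (by positivity)).ne'
  field_simp

lemma sumKernel_sub_succ {n : ℕ} (hβn : β + n ≠ 0) :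
    sumKernel β n - sumKernel β (n + 1) = (1 - β) / (n + 1) * sumKernel β n := by
  rw [sumKernel_succ hβn]
  field_simp
  ring

end SumKernel

section DeltaSum

variable {a : ℤ} {β : ℝ} {f : ℤ → ℝ}

lemma Gamma_mul_deltaSum (hβ : 0 < β) (k : ℕ) :
    Real.Gamma β * deltaSum a β f k = ∑ j ∈ range (k + 1), sumKernel β (k - j) * f (a + j) := by
  rw [deltaSum, ← mul_assoc, mul_one_div_cancel (Real.Gamma_pos_of_pos hβ).ne', one_mul]
  refine sum_congr rfl fun j hj => ?_
  rw [fallingFactorial_eq_sumKernel β (Nat.lt_succ_iff.mp (mem_range.mp hj))]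

lemma Gamma_mul_deltaSum_succ_sub (hβ : 0 < β) (k : ℕ) :
    Real.Gamma β * (deltaSum a β f (k + 1) - deltaSum a β f k) =
      Real.Gamma β * f (a + (k + 1 : ℕ)) -
        (1 - β) * ∑ j ∈ range (k + 1), sumKernel β (k - j) / ((k - j : ℕ) + 1) * f (a + j) := by
  rw [mul_sub, Gamma_mul_deltaSum hβ, Gamma_mul_deltaSum hβ, sum_range_succ, Nat.sub_self,
    sumKernel_zero, mul_sum, add_sub_right_comm, ← sum_sub_distrib, add_comm, sub_eq_add_neg,
    ← sum_neg_distrib]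
  congr 1
  refine sum_congr rfl fun j hj => ?_
  have hjk : j ≤ k := Nat.lt_succ_iff.mp (mem_range.mp hj)
  rw [Nat.sub_add_comm hjk, ← neg_sub, ← sub_mul, sumKernel_sub_succ (by positivity)]
  ring

/-- The `j = k` term of the increment formula, all other terms being
nonnegative, bounds `f (a + k + 1)` from below. -/
lemma one_sub_mul_le_of_deltaSum_le (hβ0 : 0 < β) (hβ1 : β ≤ 1) {k : ℕ}
    (hf : ∀ j < k, 0 ≤ f (a + j)) (hmono : deltaSum a β f k ≤ deltaSum a β f (k + 1)) :
    (1 - β) * f (a + k) ≤ f (a + (k + 1 : ℕ)) := by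
  have hΓ : 0 < Real.Gamma β := Real.Gamma_pos_of_pos hβ0
  set S := ∑ j ∈ range (k + 1), sumKernel β (k - j) / ((k - j : ℕ) + 1) * f (a + j)
  have hS : (1 - β) * S ≤ Real.Gamma β * f (a + (k + 1 : ℕ)) := by
    have := mul_nonneg hΓ.le (sub_nonneg.mpr hmono)
    rw [Gamma_mul_deltaSum_succ_sub hβ0] at this
    linarith
  have hS_ge : Real.Gamma β * f (a + k) ≤ S := by
    have hrest : 0 ≤ ∑ j ∈ range k, sumKernel β (k - j) / ((k - j : ℕ) + 1) * f (a + j) :=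
      sum_nonneg fun j hj =>
        mul_nonneg (div_nonneg (sumKernel_pos hβ0 _).le (by positivity)) (hf j (mem_range.mp hj))
    simp only [S, sum_range_succ, Nat.sub_self, sumKernel_zero, Nat.cast_zero, zero_add, div_one]
    linarith
  have hΓS := mul_le_mul_of_nonneg_left hS_ge (sub_nonneg.mpr hβ1)
  have : Real.Gamma β * ((1 - β) * f (a + k)) ≤ Real.Gamma β * f (a + (k + 1 : ℕ)) := by
    linarith
  exact le_of_mul_le_mul_left this hΓ

end DeltaSum

lemma forall_mul_le_succ_of_prefix_nonneg {c : ℝ} (hc : 0 ≤ c) {u : ℕ → ℝ} (h0 : 0 ≤ u 0)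
    (hstep : ∀ k, (∀ j < k, 0 ≤ u j) → c * u k ≤ u (k + 1)) (k : ℕ) :
    c * u k ≤ u (k + 1) := by
  have hnn : ∀ k, 0 ≤ u k := by
    intro k
    induction k using Nat.strong_induction_on with
    | _ k ih =>
      cases k with
      | zero => exact h0
      | succ k =>
        exact (mul_nonneg hc (ih k k.lt_succ_self)).trans
          (hstep k fun j hj => ih j (hj.trans k.lt_succ_self))
  exact hstep k fun j _ => hnn j

/-- If `y(0) ≥ 0`, `ν ∈ (0,1)`, and `Δ_0^ν y(t) = Δ (Δ_0^{-(1-ν)} y)(t) ≥ 0` for each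
`t ∈ ℕ_{1-ν}` (the grid points `t = (1-ν) + k`, `k ∈ ℕ`), then `y` is `ν`-increasing on
`ℕ_0`: `y(a+1) ≥ ν y(a)` for all `a ∈ ℕ_0`. -/
theorem delta_nu_increasing (ν : ℝ) (hν : ν ∈ Set.Ioo (0 : ℝ) 1) (y : ℤ → ℝ)
    (hy0 : y 0 ≥ 0)
    (h : ∀ k : ℕ, deltaSum 0 (1 - ν) y (k + 1) - deltaSum 0 (1 - ν) y k ≥ 0) :
    ∀ a : ℤ, 0 ≤ a → y (a + 1) ≥ ν * y a := by
  obtain ⟨hν0, hν1⟩ := hν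
  intro a ha
  lift a to ℕ using ha
  have hstep (k : ℕ) (hk : ∀ j < k, 0 ≤ y j) : ν * y k ≤ y (k + 1 : ℕ) := by
    have := one_sub_mul_le_of_deltaSum_le (a := 0) (by linarith) (by linarith)
      (by simpa using hk) (sub_nonneg.mp (h k))
    simpa using this
  exact_mod_cast forall_mul_le_succ_of_prefix_nonneg (u := fun k => y k) hν0.le hy0 hstep a
end

section
/- Let y : ℕ_0 → ℝ, fix ν ∈ (0,1), and suppose the nabla Riemann fractional difference ∇_{−1}^ν y(t) ≥ 0 for each t ∈ ℕ_0. Then y is ν-increasing on ℕ_0, i.e., y(0) ≥ 0 and y(a+1) ≥ ν y(a) for all a ∈ ℕ_0. -/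
noncomputable def Pprod (ν : ℝ) (k : ℕ) : ℝ := ∏ i ∈ Finset.range k, ((i : ℝ) - ν)

lemma Pprod_zero (ν : ℝ) : Pprod ν 0 = 1 := by simp [Pprod]

lemma Pprod_one (ν : ℝ) : Pprod ν 1 = -ν := by simp [Pprod]

lemma Pprod_nonpos (ν : ℝ) (hν : ν ∈ Set.Ioo (0 : ℝ) 1) :
    ∀ k : ℕ, 1 ≤ k → Pprod ν k ≤ 0 := by
  intro k hk
  induction k, hk using Nat.le_induction with
  | base => simp [Pprod_one]; linarith [hν.1]
  | succ k hk ih =>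
    have hpos : (0:ℝ) ≤ (k:ℝ) - ν := by
      have : (1:ℝ) ≤ (k:ℝ) := by exact_mod_cast hk
      linarith [hν.2]
    have : Pprod ν (k+1) = Pprod ν k * ((k:ℝ) - ν) := by
      simp [Pprod, Finset.prod_range_succ]
    rw [this]
    exact mul_nonpos_of_nonpos_of_nonneg ih hpos

lemma gamma_sub_eq (ν : ℝ) (hν : ν ∈ Set.Ioo (0 : ℝ) 1) (k : ℕ) :
    Real.Gamma ((k:ℝ) - ν) = Pprod ν k * Real.Gamma (-ν) := by
  induction k with
  | zero => simp [Pprod_zero]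
  | succ k ih =>
    have hne : (k:ℝ) - ν ≠ 0 := by
      rcases Nat.eq_zero_or_pos k with hk | hk
      · subst hk; simp; linarith [hν.1]
      · have : (1:ℝ) ≤ (k:ℝ) := by exact_mod_cast hk
        intro hc; linarith [hν.2]
    have hcast : ((k+1:ℕ):ℝ) - ν = ((k:ℝ) - ν) + 1 := by push_cast; ring
    rw [hcast, Real.Gamma_add_one hne, ih]
    simp only [Pprod, Finset.prod_range_succ]
    ring

lemma gamma_neg_ne_zero (ν : ℝ) (hν : ν ∈ Set.Ioo (0 : ℝ) 1) :
    Real.Gamma (-ν) ≠ 0 := by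
  apply Real.Gamma_ne_zero
  intro m
  rcases Nat.eq_zero_or_pos m with hm | hm
  · subst hm; simp; linarith [hν.1]
  · have : (1:ℝ) ≤ (m:ℝ) := by exact_mod_cast hm
    intro hc
    have : ν = (m:ℝ) := by linarith [neg_injective hc]
    linarith [hν.2]

/-- the coefficient identity -/
lemma coeff_eq (ν : ℝ) (hν : ν ∈ Set.Ioo (0 : ℝ) 1) (k : ℕ) :
    (1 / Real.Gamma (-ν)) * risingFactorial ((k:ℝ) + 1) (-ν - 1)
      = Pprod ν k / (Nat.factorial k) := by
  have h1 : (k:ℝ) + 1 + (-ν - 1) = (k:ℝ) - ν := by ring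
  have h2 : Real.Gamma ((k:ℝ) + 1) = Nat.factorial k := by
    exact_mod_cast Real.Gamma_nat_eq_factorial k
  rw [risingFactorial, h1, h2, gamma_sub_eq ν hν k]
  field_simp [gamma_neg_ne_zero ν hν]

lemma nabla_formula (ν : ℝ) (hν : ν ∈ Set.Ioo (0 : ℝ) 1) (y : ℤ → ℝ) (n : ℕ) :
    nablaRL 0 ν y (n : ℤ)
      = ∑ j ∈ Finset.range (n + 1), (Pprod ν (n - j) / (Nat.factorial (n - j))) * y (j : ℤ) := by
  rw [nablaRL, Finset.mul_sum]
  have htoNat : ((n : ℤ) - 0).toNat = n := by simp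
  rw [htoNat]
  apply Finset.sum_congr rfl
  intro j hj
  have hjn : j ≤ n := Nat.lt_succ_iff.mp (Finset.mem_range.mp hj)
  have hcast : ((n:ℤ):ℝ) - ((0:ℤ):ℝ) - (j:ℝ) + 1 = ((n - j : ℕ) : ℝ) + 1 := by
    push_cast [Nat.cast_sub hjn]; ring
  rw [hcast]
  rw [← mul_assoc, coeff_eq ν hν (n - j)]
  norm_num

lemma key (ν : ℝ) (hν : ν ∈ Set.Ioo (0 : ℝ) 1) (y : ℤ → ℝ)
    (h : ∀ t : ℤ, 0 ≤ t → nablaRL 0 ν y t ≥ 0) :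
    ∀ n : ℕ, 0 ≤ y (n : ℤ) ∧ ∀ m : ℕ, n = m + 1 → ν * y (m : ℤ) ≤ y (n : ℤ) := by
  intro n
  induction n using Nat.strong_induction_on with
  | _ n ih =>
    have hsum : 0 ≤ ∑ j ∈ Finset.range (n + 1),
        (Pprod ν (n - j) / (Nat.factorial (n - j))) * y (j : ℤ) := by
      rw [← nabla_formula ν hν y n]
      exact h (n : ℤ) (by positivity)
    match n with
    | 0 =>
      constructor
      · simpa [Pprod_zero] using hsum
      · intro m hm; omega
    | (m + 1) =>
      rw [Finset.sum_range_succ, Finset.sum_range_succ] at hsum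
      have e0 : (m + 1) - (m + 1) = 0 := by omega
      have e1 : (m + 1) - m = 1 := by omega
      rw [e0, e1, Pprod_zero, Pprod_one] at hsum
      simp only [Nat.factorial] at hsum
      have hrest : ∑ j ∈ Finset.range m,
          (Pprod ν (m + 1 - j) / (Nat.factorial (m + 1 - j))) * y (j : ℤ) ≤ 0 := by
        apply Finset.sum_nonpos
        intro j hj
        have hjm : j < m := Finset.mem_range.mp hj
        have h1 : 1 ≤ m + 1 - j := by omega
        have hP : Pprod ν (m + 1 - j) ≤ 0 := Pprod_nonpos ν hν _ h1
        have hfac : (0:ℝ) < (Nat.factorial (m + 1 - j) : ℝ) := by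
          exact_mod_cast Nat.factorial_pos _
        have hyj : 0 ≤ y (j : ℤ) := (ih j (by omega)).1
        have : Pprod ν (m + 1 - j) / (Nat.factorial (m + 1 - j)) ≤ 0 :=
          div_nonpos_of_nonpos_of_nonneg hP hfac.le
        exact mul_nonpos_of_nonpos_of_nonneg this hyj
      have hym : 0 ≤ y (m : ℤ) := (ih m (by omega)).1
      have hkey : ν * y (m : ℤ) ≤ y ((m + 1 : ℕ) : ℤ) := by
        have : (-ν / (1:ℕ).factorial) * y (m : ℤ) = -(ν * y (m:ℤ)) := by
          simp [Nat.factorial]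
        nlinarith [hsum, hrest]
      have hy' : 0 ≤ y ((m + 1 : ℕ) : ℤ) :=
        le_trans (by positivity) (le_trans (le_refl _) (by nlinarith [hν.1, hym, hkey]))
      refine ⟨hy', ?_⟩
      intro m' hm'
      have : m' = m := by omega
      subst this
      exact hkey

/-- If `ν ∈ (0,1)` and `∇_{-1}^ν y(t) ≥ 0` for each `t ∈ ℕ_0`, then `y` is
`ν`-increasing on `ℕ_0`: `y(0) ≥ 0` and `y(a+1) ≥ ν y(a)` for all `a ∈ ℕ_0`. -/
theorem nabla_nu_increasing (ν : ℝ) (hν : ν ∈ Set.Ioo (0 : ℝ) 1) (y : ℤ → ℝ)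
    (h : ∀ t : ℤ, 0 ≤ t → nablaRL 0 ν y t ≥ 0) :
    y 0 ≥ 0 ∧ ∀ a : ℤ, 0 ≤ a → y (a + 1) ≥ ν * y a := by
  have K := key ν hν y h
  constructor
  · simpa using (K 0).1
  · intro a ha
    obtain ⟨n, rfl⟩ : ∃ n : ℕ, a = (n : ℤ) := ⟨a.toNat, (Int.toNat_of_nonneg ha).symm⟩
    have := (K (n + 1)).2 n rfl
    push_cast at this ⊢
    linarith
end

section
/- Let f : ℕ_0 → ℝ be increasing on ℕ_0 (i.e., f(t+1) ≥ f(t) for all t) with f(0) ≥ 0, and fix ν ∈ (0,1). Then ∇_{−1}^ν f(t) ≥ 0 for each t ∈ ℕ_0. -/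
namespace NablaAux

noncomputable def b (ν : ℝ) (k : ℕ) : ℝ := Real.Gamma (k - ν) / Real.Gamma (k + 1)

noncomputable def S (ν : ℝ) (m : ℕ) : ℝ := Real.Gamma (m + 1 - ν) / (-ν * Real.Gamma (m + 1))

lemma Sneg {ν : ℝ} (hν : ν ∈ Set.Ioo (0 : ℝ) 1) (m : ℕ) : S ν m < 0 := by
  obtain ⟨h0, h1⟩ := hν
  have hnum : 0 < Real.Gamma (m + 1 - ν) := Real.Gamma_pos_of_pos (by
    have : (0:ℝ) ≤ m := Nat.cast_nonneg m
    linarith)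
  have hden : -ν * Real.Gamma (m + 1) < 0 := by
    have : 0 < Real.Gamma (m + 1) := Real.Gamma_pos_of_pos (by positivity)
    nlinarith
  exact div_neg_of_pos_of_neg hnum hden

lemma Gamma_neg_ν {ν : ℝ} (hν : ν ∈ Set.Ioo (0 : ℝ) 1) : Real.Gamma (-ν) < 0 := by
  obtain ⟨h0, h1⟩ := hν
  have hne : (-ν) ≠ 0 := by linarith
  have h := Real.Gamma_add_one hne
  have hpos : 0 < Real.Gamma (-ν + 1) := Real.Gamma_pos_of_pos (by linarith)
  nlinarith [h]

lemma S_zero {ν : ℝ} (hν : ν ∈ Set.Ioo (0 : ℝ) 1) : S ν 0 = Real.Gamma (-ν) := by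
  obtain ⟨h0, h1⟩ := hν
  have hne : (-ν) ≠ 0 := by linarith
  have h := Real.Gamma_add_one hne
  simp only [S, Nat.cast_zero, zero_add, Real.Gamma_one, mul_one]
  rw [show (1:ℝ) - ν = -ν + 1 by ring, h]
  field_simp

lemma S_succ {ν : ℝ} (hν : ν ∈ Set.Ioo (0 : ℝ) 1) (m : ℕ) :
    S ν (m + 1) = S ν m + b ν (m + 1) := by
  obtain ⟨h0, h1⟩ := hν
  have hx : (m : ℝ) + 1 - ν ≠ 0 := by
    have : (0:ℝ) ≤ m := Nat.cast_nonneg m; intro h; nlinarith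
  have hG1 : Real.Gamma ((m:ℝ) + 1 + 1 - ν) = ((m:ℝ) + 1 - ν) * Real.Gamma ((m:ℝ) + 1 - ν) := by
    rw [show (m:ℝ) + 1 + 1 - ν = ((m:ℝ) + 1 - ν) + 1 by ring, Real.Gamma_add_one hx]
  have hG2 : Real.Gamma ((m:ℝ) + 1 + 1) = ((m:ℝ) + 1) * Real.Gamma ((m:ℝ) + 1) := by
    rw [show (m:ℝ) + 1 + 1 = ((m:ℝ) + 1) + 1 by ring,
      Real.Gamma_add_one (by positivity)]
  have hGpos : 0 < Real.Gamma ((m:ℝ) + 1) := Real.Gamma_pos_of_pos (by positivity)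
  simp only [S, b, Nat.cast_add, Nat.cast_one]
  rw [hG1, hG2]
  have hνne : ν ≠ 0 := ne_of_gt h0
  have hm1 : (m:ℝ) + 1 ≠ 0 := by positivity
  field_simp
  ring

lemma key {ν : ℝ} (hν : ν ∈ Set.Ioo (0 : ℝ) 1) (n : ℕ) :
    ∀ g : ℕ → ℝ, (∀ j, g j ≤ g (j + 1)) → 0 ≤ g 0 →
      ∑ k ∈ Finset.range (n + 1), b ν k * g (n - k) ≤ S ν n * g 0 := by
  induction n with
  | zero =>
      intro g hg h0
      rw [Finset.sum_range_one]
      have : b ν 0 = S ν 0 := by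
        simp [b, S_zero hν, Real.Gamma_one]
      rw [this]
  | succ n ih =>
      intro g hg h0
      rw [Finset.sum_range_succ]
      have hsum : ∑ k ∈ Finset.range (n + 1), b ν k * g (n + 1 - k)
          = ∑ k ∈ Finset.range (n + 1), b ν k * (fun j => g (j + 1)) (n - k) := by
        apply Finset.sum_congr rfl
        intro k hk
        have hk' : k ≤ n := Nat.lt_succ_iff.mp (Finset.mem_range.mp hk)
        congr 1
        show g (n + 1 - k) = g ((n - k) + 1)
        congr 1
        omega
      rw [hsum]
      have hih := ih (fun j => g (j + 1)) (fun j => hg (j + 1)) (le_trans h0 (hg 0))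
      simp only [Nat.sub_self]
      have hSn := Sneg hν n
      have h1 : S ν n * g 1 ≤ S ν n * g 0 :=
        mul_le_mul_of_nonpos_left (hg 0) (le_of_lt hSn)
      calc ∑ k ∈ Finset.range (n + 1), b ν k * (fun j => g (j + 1)) (n - k) + b ν (n + 1) * g 0
          ≤ S ν n * g 1 + b ν (n + 1) * g 0 := by
            have : (fun j => g (j + 1)) 0 = g 1 := rfl
            linarith [hih]
        _ ≤ S ν n * g 0 + b ν (n + 1) * g 0 := by linarith
        _ = S ν (n + 1) * g 0 := by rw [S_succ hν n]; ring

end NablaAux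

/-- If `f` is increasing on `ℕ_0` with `f(0) ≥ 0` and `ν ∈ (0,1)`, then
`∇_{-1}^ν f(t) ≥ 0` for each `t ∈ ℕ_0`. -/
theorem nabla_of_increasing (ν : ℝ) (hν : ν ∈ Set.Ioo (0 : ℝ) 1) (f : ℤ → ℝ)
    (hmono : ∀ t : ℤ, 0 ≤ t → f (t + 1) ≥ f t) (h0 : f 0 ≥ 0) :
    ∀ t : ℤ, 0 ≤ t → nablaRL 0 ν f t ≥ 0 := by
  intro t ht
  set n : ℕ := t.toNat with hn
  have htn : (t : ℝ) = (n : ℝ) := by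
    rw [hn]; exact_mod_cast (Int.toNat_of_nonneg ht).symm
  set g : ℕ → ℝ := fun j => f (j : ℤ) with hg
  have hgmono : ∀ j, g j ≤ g (j + 1) := by
    intro j
    have := hmono (j : ℤ) (Int.ofNat_nonneg j)
    simpa [hg] using this
  have hg0 : 0 ≤ g 0 := h0
  unfold nablaRL
  have hterm : ∀ j ∈ Finset.range (n + 1),
      risingFactorial ((t : ℝ) - ((0:ℤ) : ℝ) - (j : ℝ) + 1) (-ν - 1) * f (0 + j)
        = NablaAux.b ν (n - j) * g j := by
    intro j hj
    have hj' : j ≤ n := Nat.lt_succ_iff.mp (Finset.mem_range.mp hj)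
    have hcast : ((n - j : ℕ) : ℝ) = (n : ℝ) - (j : ℝ) := by
      push_cast [hj']; ring
    simp only [risingFactorial, NablaAux.b, hcast, htn, Int.cast_zero, zero_add, hg]
    congr 2 <;> ring
  have hidx : (t - 0).toNat = n := by rw [hn]; simp
  rw [hidx, Finset.sum_congr rfl hterm]
  have hreflect : ∑ j ∈ Finset.range (n + 1), NablaAux.b ν (n - j) * g j
      = ∑ k ∈ Finset.range (n + 1), NablaAux.b ν k * g (n - k) := by
    rw [← Finset.sum_range_reflect (fun k => NablaAux.b ν k * g (n - k)) (n + 1)]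
    apply Finset.sum_congr rfl
    intro j hj
    have hj' : j ≤ n := Nat.lt_succ_iff.mp (Finset.mem_range.mp hj)
    have h1 : n + 1 - 1 - j = n - j := by omega
    have h2 : n - (n - j) = j := by omega
    rw [h1, h2]
  rw [hreflect]
  have hkey := NablaAux.key hν n g hgmono hg0
  have hS : NablaAux.S ν n * g 0 ≤ 0 :=
    mul_nonpos_of_nonpos_of_nonneg (le_of_lt (NablaAux.Sneg hν n)) hg0
  have hsum : ∑ k ∈ Finset.range (n + 1), NablaAux.b ν k * g (n - k) ≤ 0 := le_trans hkey hS
  have hGneg : 1 / Real.Gamma (-ν) ≤ 0 :=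
    le_of_lt (div_neg_of_pos_of_neg one_pos (NablaAux.Gamma_neg_ν hν))
  nlinarith [hGneg, hsum]
end

section
/- (Q-operator dual identity.) Let a ≡ b (mod 1), a < b, and f defined on ℕ_a ∩ {b, b−1, ...}. Define (Qf)(s) = f(a+b−s). Then for any α > 0, Δ_a^{−α}(Qf)(t) = Q(ب_Δ^{−α} f)(t), i.e., (1/Γ(α)) Σ_{s=a}^{t−α} (t−s−1)^{(α−1)} f(a+b−s) = (1/Γ(α)) Σ_{s=(a+b−t)+α}^{b} (s−(a+b−t)−1)^{(α−1)} f(s). -/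
/-- Q-operator dual identity: with `(Qf)(s) = f(a+b-s)` and `α > 0`,
`Δ_a^{-α}(Qf)(t) = Q(_bΔ^{-α} f)(t)` for `t = a + α + k`. The right-hand side is the
delta right fractional sum `(1/Γ(α)) Σ_{s=u+α}^{b} (s-u-1)^{(α-1)} f(s)` evaluated at
`u = a + b - t = b - α - k`, i.e. `(1/Γ(α)) Σ_{j=0}^{k} (α+j-1)^{(α-1)} f(b-k+j)`. -/
theorem Q_operator_dual_identity (a b : ℤ) (hab : a < b) (α : ℝ) (hα : 0 < α)
    (f : ℤ → ℝ) :
    ∀ k : ℕ, (k : ℤ) ≤ b - a →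
      deltaSum a α (fun s => f (a + b - s)) k =
        (1 / Real.Gamma α) *
          ∑ j ∈ Finset.range (k + 1),
            fallingFactorial (α + (j : ℝ) - 1) (α - 1) * f (b - k + j) := by
  intro k _
  unfold deltaSum
  congr 1
  rw [← Finset.sum_range_reflect]
  refine Finset.sum_congr rfl fun j hj => ?_
  have hjk : j ≤ k := Nat.lt_succ_iff.mp (Finset.mem_range.mp hj)
  have h1 : k + 1 - 1 - j = k - j := by omega
  rw [h1]
  have h2 : ((k - j : ℕ) : ℝ) = (k : ℝ) - (j : ℝ) := by
    push_cast [hjk]; ring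
  have h3 : a + b - (a + ((k - j : ℕ) : ℤ)) = b - k + j := by
    push_cast [hjk]; ring
  simp only [h2, h3]
  ring_nf
end
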